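/- arXiv:1801.00726 — 2 statements merged into one kernel-verified Lean document; each statement's English description precedes it below -/
import Mathlib

section
/- If G is a finite simple graph without isolated vertices, then the brushing number of G is at most the zero forcing number of the line graph of G, i.e., B(G) ≤ Z(L(G)). -/
open SimpleGraph

/-- `σ` is an ordering of the vertices of `H` witnessing that its first `k` vertices form a
zero forcing set: every vertex at position `j ≥ k` is forced by some earlier vertex `σ i`,
i.e. `σ j` is the unique neighbor of `σ i` among `{σ j, σ (j+1), …}`. -/
def IsZeroForcingOrder {V : Type*} [Fintype V] (H : SimpleGraph V) (k : ℕ)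
    (σ : Fin (Fintype.card V) ≃ V) : Prop :=
  ∀ j : Fin (Fintype.card V), k ≤ (j : ℕ) →
    ∃ i : Fin (Fintype.card V), (i : ℕ) < (j : ℕ) ∧
      ∀ l : Fin (Fintype.card V), (j : ℕ) ≤ (l : ℕ) → (H.Adj (σ i) (σ l) ↔ l = j)

/-- The zero forcing number of a finite simple graph. -/
noncomputable def zeroForcingNumber {V : Type*} [Fintype V] (H : SimpleGraph V) : ℕ :=
  sInf {k | 1 ≤ k ∧ ∃ σ : Fin (Fintype.card V) ≃ V, IsZeroForcingOrder H k σ}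

/-- An orientation of a simple graph: each edge receives exactly one direction. -/
structure GraphOrientation {V : Type*} (G : SimpleGraph V) where
  rel : V → V → Prop
  adj_of_rel : ∀ u v, rel u v → G.Adj u v
  rel_of_adj : ∀ u v, G.Adj u v → rel u v ∨ rel v u
  not_rel_symm : ∀ u v, rel u v → ¬ rel v u

/-- An orientation is acyclic if it has no directed cycle. -/
def GraphOrientation.Acyclic {V : Type*} {G : SimpleGraph V} (o : GraphOrientation G) : Prop :=
  ∀ v : V, ¬ Relation.TransGen o.rel v v

/-- The brushing number of a finite simple graph: the minimum positive integer `k` for which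
there is an acyclic orientation of `G` and `k` directed paths in that orientation such that
each directed edge belongs to at least one of the paths. -/
noncomputable def brushingNumber {V : Type*} [Fintype V] (G : SimpleGraph V) : ℕ :=
  sInf {k | 1 ≤ k ∧ ∃ o : GraphOrientation G, o.Acyclic ∧
    ∃ P : Fin k → List V, (∀ i, (P i).Chain' o.rel) ∧
      ∀ u v : V, o.rel u v → ∃ i, [u, v] <:+: P i}

/-!
Fix a zero forcing order of `L(G)` whose first `Z(L(G))` edges are coloured initially. Every later
edge is forced by an earlier one and an edge forces at most one edge, so the edges split into
`Z(L(G))` forcing chains, each starting at an initial edge. Rank every vertex by the index of its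
last edge, breaking the tie between the two ends of an edge that is the last edge at both by a
chosen anchor endpoint, and direct each edge towards its higher ranked end; this orientation is
acyclic. Once an edge `i` forces `j`, no edge after `j` meets `i`: so the vertex `q` shared by `i`
and `j` has last edge `j`, the other end of `i` has its last edge before `j`, and `q` is the head
of `i` and the tail of `j`. Each forcing chain is therefore a directed path, and these paths cover
every edge.
-/

theorem exists_start_reflTransGen {ι : Type*} [LT ι] [WellFoundedLT ι] {start : ι → Prop}
    {next : ι → ι → Prop} (h : ∀ j, ¬ start j → ∃ i < j, next i j) (j : ι) :
    ∃ p, start p ∧ Relation.ReflTransGen next p j := by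
  induction j using WellFoundedLT.induction with
  | _ j ih =>
    by_cases hj : start j
    · exact ⟨j, hj, .refl⟩
    · obtain ⟨i, hij, hnext⟩ := h j hj
      obtain ⟨p, hp, hpi⟩ := ih i hij
      exact ⟨p, hp, hpi.tail hnext⟩

theorem exists_isChain_infix_of_reflTransGen {ι α : Type*} [LT ι] [WellFoundedGT ι]
    {R : α → α → Prop} {next : ι → ι → Prop} (tail head : ι → α)
    (hR : ∀ j, R (tail j) (head j)) (hlt : ∀ i j, next i j → i < j)
    (hunique : ∀ i j j', next i j → next i j' → j = j')
    (hlink : ∀ i j, next i j → head i = tail j) (p : ι) :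
    ∃ t : List α, (tail p :: head p :: t).IsChain R ∧
      ∀ j, Relation.ReflTransGen next p j → [tail j, head j] <:+: tail p :: head p :: t := by
  induction p using WellFoundedGT.induction with
  | _ p ih =>
    by_cases hp : ∃ p', next p p'
    · obtain ⟨p', hp'⟩ := hp
      obtain ⟨t, hchain, hcover⟩ := ih p' (hlt _ _ hp')
      rw [← hlink _ _ hp'] at hchain hcover
      refine ⟨head p' :: t, hchain.cons_cons (hR p), fun j hj => ?_⟩
      rcases hj.cases_head with rfl | ⟨q, hq, hqj⟩
      · exact (List.prefix_append _ _).isInfix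
      · rw [hunique _ _ _ hq hp'] at hqj
        exact (hcover j hqj).trans (List.suffix_cons _ _).isInfix
    · push Not at hp
      refine ⟨[], .cons_cons (hR p) (.singleton _), fun j hj => ?_⟩
      rcases hj.cases_head with rfl | ⟨q, hq, -⟩
      · exact List.infix_refl _
      · exact absurd hq (hp q)

theorem Sym2.eq_and_eq_of_mk_eq_mk_of_lt {α β : Type*} [Preorder β] {r : α → β} {u v u' v' : α}
    (h : s(u, v) = s(u', v')) (hr : r u < r v) (hr' : r u' < r v') : u = u' ∧ v = v' := by
  rcases Sym2.eq_iff.mp h with h | ⟨rfl, rfl⟩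
  · exact h
  · exact absurd (hr.trans hr') (lt_irrefl _)

namespace GraphOrientation

variable {V β : Type*} [LinearOrder β] {G : SimpleGraph V}

def ofRank (G : SimpleGraph V) (r : V → β) (hr : ∀ u v, G.Adj u v → r u ≠ r v) :
    GraphOrientation G where
  rel u v := G.Adj u v ∧ r u < r v
  adj_of_rel _ _ h := h.1
  rel_of_adj u v h := (hr u v h).lt_or_gt.imp (⟨h, ·⟩) (⟨h.symm, ·⟩)
  not_rel_symm _ _ h h' := lt_asymm h.2 h'.2

theorem acyclic_ofRank (r : V → β) (hr : ∀ u v, G.Adj u v → r u ≠ r v) :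
    (ofRank G r hr).Acyclic := by
  have hlt : ∀ u v, Relation.TransGen (ofRank G r hr).rel u v → r u < r v := by
    intro u v h
    induction h with
    | single h => exact h.2
    | tail _ h ih => exact ih.trans h.2
  exact fun v hv => lt_irrefl _ (hlt v v hv)

end GraphOrientation

theorem SimpleGraph.exists_eq_mk_adj_lt {V β : Type*} [LinearOrder β] {G : SimpleGraph V}
    {r : V → β} (hr : ∀ u v, G.Adj u v → r u ≠ r v) {e : Sym2 V} (he : e ∈ G.edgeSet) :
    ∃ u v, e = s(u, v) ∧ G.Adj u v ∧ r u < r v := by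
  induction e using Sym2.ind with
  | _ u v =>
    rcases (hr u v he).lt_or_gt with h | h
    · exact ⟨u, v, rfl, he, h⟩
    · exact ⟨v, u, Sym2.eq_swap, G.adj_symm he, h⟩

theorem brushingNumber_le_of_rank {V β : Type*} [Fintype V] [LinearOrder β] {G : SimpleGraph V}
    {k : ℕ} (hk : 1 ≤ k) (r : V → β) (hr : ∀ u v, G.Adj u v → r u ≠ r v) (P : Fin k → List V)
    (hP : ∀ i, (P i).IsChain fun u v => G.Adj u v ∧ r u < r v)
    (hcover : ∀ u v, G.Adj u v → r u < r v → ∃ i, [u, v] <:+: P i) :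
    brushingNumber G ≤ k :=
  Nat.sInf_le ⟨hk, .ofRank G r hr, GraphOrientation.acyclic_ofRank r hr, P, hP,
    fun u v h => hcover u v h.1 h.2⟩

theorem one_le_zeroForcingNumber_and_exists_isZeroForcingOrder {W : Type*} [Fintype W]
    (H : SimpleGraph W) :
    1 ≤ zeroForcingNumber H ∧ ∃ σ, IsZeroForcingOrder H (zeroForcingNumber H) σ :=
  Nat.sInf_mem (s := {k | 1 ≤ k ∧ ∃ σ, IsZeroForcingOrder H k σ})
    ⟨Fintype.card W + 1, Nat.le_add_left 1 _, (Fintype.equivFin W).symm,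
      fun j hj => absurd j.isLt (by omega)⟩

section LastIndex

variable {V : Type*} {n : ℕ} (e : Fin n → Sym2 V)

open Classical in
noncomputable def lastIndex (v : V) : ℕ :=
  (Finset.univ.filter fun l => v ∈ e l).sup Fin.val

variable {e} {v : V} {l : Fin n}

theorem le_lastIndex (h : v ∈ e l) : (l : ℕ) ≤ lastIndex e v := by
  classical
  exact Finset.le_sup (f := Fin.val) (by simpa using h)

theorem lastIndex_le {b : ℕ} (h : ∀ l, v ∈ e l → (l : ℕ) ≤ b) : lastIndex e v ≤ b := by
  classical
  exact Finset.sup_le fun l hl => h l (by simpa using hl)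

theorem exists_mem_lastIndex (h : v ∈ e l) : ∃ m, v ∈ e m ∧ (m : ℕ) = lastIndex e v := by
  classical
  obtain ⟨m, hm, hsup⟩ :=
    Finset.exists_mem_eq_sup (Finset.univ.filter fun l => v ∈ e l) ⟨l, by simpa using h⟩ Fin.val
  exact ⟨m, by simpa using hm, hsup.symm⟩

end LastIndex

section VertexRank

variable {V : Type*} {n : ℕ} (e : Fin n → Sym2 V) (a : Fin n → V)

open Classical in
noncomputable def vertexRank (v : V) : ℕ :=
  2 * lastIndex e v + if ∃ m, a m = v ∧ (m : ℕ) = lastIndex e v then 0 else 1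

variable {e a} {u v : V} {j l m : Fin n}

theorem two_mul_lastIndex_le_vertexRank : 2 * lastIndex e v ≤ vertexRank e a v := by
  unfold vertexRank; split_ifs <;> omega

theorem vertexRank_le : vertexRank e a v ≤ 2 * lastIndex e v + 1 := by
  unfold vertexRank; split_ifs <;> omega

theorem vertexRank_of_anchor (hm : lastIndex e v = m) (hv : a m = v) :
    vertexRank e a v = 2 * m := by
  unfold vertexRank
  rw [if_pos ⟨m, hv, hm.symm⟩, hm]
  rfl

theorem vertexRank_of_not_anchor (hm : lastIndex e v = m) (hv : a m ≠ v) :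
    vertexRank e a v = 2 * m + 1 := by
  unfold vertexRank
  rw [if_neg, hm]
  rintro ⟨l, rfl, hl⟩
  exact hv (congrArg a (Fin.ext (hl.trans hm)).symm)

theorem vertexRank_ne (ha : ∀ m, a m ∈ e m) (huv : u ≠ v) (hu : u ∈ e l) (hv : v ∈ e l) :
    vertexRank e a u ≠ vertexRank e a v := by
  intro h
  obtain ⟨m, hmu, hmu'⟩ := exists_mem_lastIndex hu
  obtain ⟨m', hmv, hmv'⟩ := exists_mem_lastIndex hv
  have := two_mul_lastIndex_le_vertexRank (e := e) (a := a) (v := u)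
  have := two_mul_lastIndex_le_vertexRank (e := e) (a := a) (v := v)
  have := vertexRank_le (e := e) (a := a) (v := u)
  have := vertexRank_le (e := e) (a := a) (v := v)
  obtain rfl : m = m' := Fin.ext (by omega)
  have ham := ha m
  rw [(Sym2.mem_and_mem_iff huv).mp ⟨hmu, hmv⟩, Sym2.mem_iff] at ham
  rcases ham with ham | ham
  · rw [vertexRank_of_anchor hmu'.symm ham, vertexRank_of_not_anchor hmv'.symm (ham ▸ huv)] at h
    omega
  · rw [vertexRank_of_not_anchor hmu'.symm (ham ▸ huv.symm),
      vertexRank_of_anchor hmv'.symm ham] at h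
    omega

theorem lt_vertexRank (hv : v ∈ e j) (hav : a j ≠ v) : 2 * (j : ℕ) < vertexRank e a v := by
  have hj := le_lastIndex hv
  rcases hj.eq_or_lt with hj | hj
  · rw [vertexRank_of_not_anchor (m := j) hj.symm hav]
    omega
  · have := two_mul_lastIndex_le_vertexRank (e := e) (a := a) (v := v)
    omega

end VertexRank

section Forcing

variable {W : Type*} [Fintype W] {H : SimpleGraph W} {σ : Fin (Fintype.card W) ≃ W}
  {i j j' : Fin (Fintype.card W)}

def Forces (H : SimpleGraph W) (σ : Fin (Fintype.card W) ≃ W) (i j : Fin (Fintype.card W)) :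
    Prop :=
  (i : ℕ) < j ∧ ∀ l : Fin (Fintype.card W), (j : ℕ) ≤ l → (H.Adj (σ i) (σ l) ↔ l = j)

theorem Forces.unique (h : Forces H σ i j) (h' : Forces H σ i j') : j = j' := by
  rcases le_total (j : ℕ) j' with hle | hle
  · exact ((h.2 j' hle).mp ((h'.2 j' le_rfl).mpr rfl)).symm
  · exact (h'.2 j hle).mp ((h.2 j le_rfl).mpr rfl)

theorem isZeroForcingOrder_iff {k : ℕ} :
    IsZeroForcingOrder H k σ ↔ ∀ j : Fin (Fintype.card W), k ≤ (j : ℕ) → ∃ i, Forces H σ i j :=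
  Iff.rfl

end Forcing

section LineGraph

variable {V : Type*} {G : SimpleGraph V} [Fintype G.edgeSet] {k : ℕ}
  {σ : Fin (Fintype.card G.edgeSet) ≃ G.edgeSet} {i j l : Fin (Fintype.card G.edgeSet)} {x : V}

theorem Forces.exists_mem_mem (h : Forces G.lineGraph σ i j) :
    ∃ x, x ∈ (σ i : Sym2 V) ∧ x ∈ (σ j : Sym2 V) :=
  (lineGraph_adj_iff_exists.mp ((h.2 j le_rfl).mpr rfl)).2

theorem Forces.le_of_mem_of_mem (h : Forces G.lineGraph σ i j) (hi : x ∈ (σ i : Sym2 V))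
    (hl : x ∈ (σ l : Sym2 V)) : (l : ℕ) ≤ j := by
  by_contra! hjl
  have hil : σ i ≠ σ l := σ.injective.ne (Fin.ne_of_val_ne (by have := h.1; omega))
  exact hjl.ne' (congrArg Fin.val
    ((h.2 l hjl.le).mp (lineGraph_adj_iff_exists.mpr ⟨hil, x, hi, hl⟩)))

theorem exists_anchor (hσ : IsZeroForcingOrder G.lineGraph k σ) :
    ∃ a : Fin (Fintype.card G.edgeSet) → V, ∀ j, a j ∈ (σ j : Sym2 V) ∧
      (k ≤ j → ∃ i, Forces G.lineGraph σ i j ∧ a j ∈ (σ i : Sym2 V)) := by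
  have : ∀ j, ∃ x, x ∈ (σ j : Sym2 V) ∧
      (k ≤ j → ∃ i, Forces G.lineGraph σ i j ∧ x ∈ (σ i : Sym2 V)) := fun j => by
    by_cases hj : k ≤ (j : ℕ)
    · obtain ⟨i, hi⟩ := isZeroForcingOrder_iff.mp hσ j hj
      obtain ⟨x, hxi, hxj⟩ := Forces.exists_mem_mem hi
      exact ⟨x, hxj, fun _ => ⟨i, hi, hxi⟩⟩
    · exact ⟨_, Sym2.out_fst_mem _, fun h => absurd h hj⟩
  choose a ha using this
  exact ⟨a, ha⟩

theorem Forces.exists_vertexRank_lt {a : Fin (Fintype.card G.edgeSet) → V}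
    (ha : ∀ m, a m ∈ (σ m : Sym2 V)) (h : Forces G.lineGraph σ i j) (hai : a j ∈ (σ i : Sym2 V)) :
    ∃ x y, (σ i : Sym2 V) = s(x, a j) ∧ (σ j : Sym2 V) = s(a j, y) ∧
      vertexRank ((↑) ∘ σ) a x < vertexRank ((↑) ∘ σ) a (a j) ∧
      vertexRank ((↑) ∘ σ) a (a j) < vertexRank ((↑) ∘ σ) a y := by
  obtain ⟨x, hx⟩ := Sym2.mem_iff_exists.mp hai
  obtain ⟨y, hy⟩ := Sym2.mem_iff_exists.mp (ha j)
  have hxa : a j ≠ x := (G.mem_edgeSet.mp (hx ▸ (σ i).2)).ne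
  have hya : a j ≠ y := (G.mem_edgeSet.mp (hy ▸ (σ j).2)).ne
  have hrank_a : vertexRank ((↑) ∘ σ) a (a j) = 2 * j :=
    vertexRank_of_anchor (le_antisymm (lastIndex_le fun l hl => h.le_of_mem_of_mem hai hl)
      (le_lastIndex (ha j))) rfl
  have hxj : x ∉ (σ j : Sym2 V) := fun hxj => by
    have : (σ j : Sym2 V) = σ i := ((Sym2.mem_and_mem_iff hxa).mp ⟨ha j, hxj⟩).trans hx.symm
    have := congrArg Fin.val (σ.injective (Subtype.ext this))
    have := h.1
    omega
  have hlast_x : lastIndex ((↑) ∘ σ) x ≤ j - 1 := lastIndex_le fun l hl => by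
    have hle := h.le_of_mem_of_mem (hx ▸ Sym2.mem_mk_right _ _) hl
    have hne : (l : ℕ) ≠ j := fun hlj => hxj (Fin.ext hlj ▸ hl)
    omega
  refine ⟨x, y, hx.trans Sym2.eq_swap, hy, ?_, ?_⟩
  · have := vertexRank_le (e := (↑) ∘ σ) (a := a) (v := x)
    have := h.1
    omega
  · have hyj : y ∈ (σ j : Sym2 V) := hy ▸ Sym2.mem_mk_right _ _
    exact hrank_a ▸ lt_vertexRank hyj hya

end LineGraph

theorem brushingNumber_le_of_isZeroForcingOrder_lineGraph {V : Type*} [Fintype V]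
    {G : SimpleGraph V} [Fintype G.edgeSet] {k : ℕ} {σ : Fin (Fintype.card G.edgeSet) ≃ G.edgeSet}
    (hk : 1 ≤ k) (hσ : IsZeroForcingOrder G.lineGraph k σ) : brushingNumber G ≤ k := by
  obtain ⟨a, ha⟩ := exists_anchor hσ
  set r := vertexRank ((↑) ∘ σ) a
  have hr : ∀ u v, G.Adj u v → r u ≠ r v := fun u v huv =>
    vertexRank_ne (fun m => (ha m).1) huv.ne (l := σ.symm ⟨s(u, v), huv⟩) (by simp) (by simp)
  choose tail head htail using fun j => G.exists_eq_mk_adj_lt hr (σ j).2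
  set next := fun i j => Forces G.lineGraph σ i j ∧ a j ∈ (σ i : Sym2 V)
  -- the edges of a forcing chain, directed by `r`, form a directed walk
  have hlink : ∀ i j, next i j → head i = tail j := by
    rintro i j ⟨hij, hai⟩
    obtain ⟨x, y, hx, hy, hxa, hay⟩ := hij.exists_vertexRank_lt (fun m => (ha m).1) hai
    exact (Sym2.eq_and_eq_of_mk_eq_mk_of_lt ((htail i).1.symm.trans hx) (htail i).2.2 hxa).2.trans
      (Sym2.eq_and_eq_of_mk_eq_mk_of_lt ((htail j).1.symm.trans hy) (htail j).2.2 hay).1.symm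
  choose t ht using exists_isChain_infix_of_reflTransGen (R := fun u v => G.Adj u v ∧ r u < r v)
    tail head (fun j => (htail j).2) (fun _ _ h => h.1.1) (fun _ _ _ h h' => h.1.unique h'.1) hlink
  refine brushingNumber_le_of_rank hk r hr (fun p => if h : (p : ℕ) < Fintype.card G.edgeSet
    then tail ⟨p, h⟩ :: head ⟨p, h⟩ :: t ⟨p, h⟩ else []) (fun p => ?_) fun u v huv hlt => ?_
  · split_ifs
    exacts [(ht _).1, .nil]
  · obtain ⟨j, hj⟩ : ∃ j, (σ j : Sym2 V) = s(u, v) := ⟨σ.symm ⟨s(u, v), huv⟩, by simp⟩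
    obtain ⟨rfl, rfl⟩ :=
      Sym2.eq_and_eq_of_mk_eq_mk_of_lt ((htail j).1.symm.trans hj) (htail j).2.2 hlt
    obtain ⟨p, hp, hpj⟩ := exists_start_reflTransGen (start := fun p : Fin _ => (p : ℕ) < k)
      (next := next) (fun j hj => ((ha j).2 (not_lt.mp hj)).imp fun _ hi => ⟨hi.1.1, hi⟩) j
    exact ⟨⟨p, hp⟩, by simpa only [dif_pos p.isLt] using (ht p).2 j hpj⟩

theorem brushingNumber_le_zeroForcingNumber_lineGraph_general
    {V : Type*} [Fintype V] [DecidableEq V]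
    (G : SimpleGraph V) [DecidableRel G.Adj] :
    brushingNumber G ≤ zeroForcingNumber G.lineGraph := by
  obtain ⟨hk, σ, hσ⟩ := one_le_zeroForcingNumber_and_exists_isZeroForcingOrder G.lineGraph
  exact brushingNumber_le_of_isZeroForcingOrder_lineGraph hk hσ

theorem brushingNumber_le_zeroForcingNumber_lineGraph
    {V : Type*} [Fintype V] [DecidableEq V] [Nonempty V]
    (G : SimpleGraph V) [DecidableRel G.Adj]
    (hiso : ∀ v : V, ∃ w : V, G.Adj v w) :
    brushingNumber G ≤ zeroForcingNumber G.lineGraph :=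
  brushingNumber_le_zeroForcingNumber_lineGraph_general G
end

section
/- If G is a finite simple graph without isolated vertices, then the zero forcing number of G is at most the zero forcing number of the line graph of G, i.e., Z(G) ≤ Z(L(G)). -/
open SimpleGraph

/-!
Fix a zero forcing order of `L(G)` with `k` initial edges, and let `ℓ v` be the last edge at `v`.
When `f` forces `e` through their common endpoint `p`, every other edge at `p` and every edge at
the far end of `f` come before `e`; in particular `ℓ p = e`. Give every vertex `v` a home edge:
`f` if `v = p` is the pivot of `e = ℓ v`, and `ℓ v` otherwise. A vertex whose home is the last edge
of its other endpoint `u` is forced by `u` at the time of its home: every other neighbour `w` of `u`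
is joined to `u` by an earlier edge, which makes the home of `w` earlier than that of `v`, unless
this edge is initial and is neither the home of `u` nor the last edge of `w`. Such vertices `w` are made
initial. Every initial vertex of `G` is then charged to a distinct initial edge of `L(G)`, its home
or that exceptional edge, so at most `k` vertices are initial.
-/

open Finset

section ZeroForcing

variable {V : Type*} [Fintype V] {H : SimpleGraph V}

theorem IsZeroForcingOrder.of_card_le {k : ℕ} (hk : Fintype.card V ≤ k)
    (σ : Fin (Fintype.card V) ≃ V) : IsZeroForcingOrder H k σ :=
  fun j hj => absurd j.isLt (by omega)

theorem zeroForcingNumber_le {k : ℕ} (hk : 1 ≤ k) {σ : Fin (Fintype.card V) ≃ V}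
    (h : IsZeroForcingOrder H k σ) : zeroForcingNumber H ≤ k :=
  Nat.sInf_le ⟨hk, σ, h⟩

theorem zeroForcingNumber_mem (H : SimpleGraph V) :
    zeroForcingNumber H ∈
      {k | 1 ≤ k ∧ ∃ σ : Fin (Fintype.card V) ≃ V, IsZeroForcingOrder H k σ} :=
  Nat.sInf_mem ⟨max 1 (Fintype.card V), le_max_left _ _, (Fintype.equivFin V).symm,
    .of_card_le (le_max_right _ _) _⟩

theorem exists_equiv_fin_mem_iff_lt (T : Finset V) (r : V → ℕ) (hr : Set.InjOn r (↑T)ᶜ) :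
    ∃ σ : Fin (Fintype.card V) ≃ V, (∀ j, σ j ∈ T ↔ (j : ℕ) < #T) ∧
      ∀ i j, σ i ∉ T → σ j ∉ T → r (σ i) < r (σ j) → i < j := by
  classical
  let key : V → ℕ := fun v => if v ∈ T then Fintype.equivFin V v else Fintype.card V + r v
  have key_lt : ∀ v ∈ T, key v < Fintype.card V := fun v hv => by simp [key, hv]
  have le_key : ∀ v ∉ T, Fintype.card V ≤ key v := fun v hv => by simp [key, hv]
  have key_injective : Function.Injective key := by
    intro v w h
    by_cases hv : v ∈ T <;> by_cases hw : w ∈ T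
    · simpa [key, hv, hw, Fin.val_inj] using h
    · exact absurd h ((key_lt v hv).trans_le (le_key w hw)).ne
    · exact absurd h.symm ((key_lt w hw).trans_le (le_key v hv)).ne
    · exact hr hv hw (by simpa [key, hv, hw] using h)
  let _ : LinearOrder V := LinearOrder.lift' key key_injective
  let σ : Fin (Fintype.card V) ≃o V := monoEquivOfFin V rfl
  have key_lt_iff (i j) : key (σ i) < key (σ j) ↔ i < j := σ.lt_iff_lt
  refine ⟨σ.toEquiv, fun j => ⟨fun (hj : σ j ∈ T) => ?_, fun hj => ?_⟩,
    fun i j (hi : σ i ∉ T) (hj : σ j ∉ T) h => ?_⟩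
  · have : #(Iio j) ≤ #(T.erase (σ j)) := by
      refine card_le_card_of_injOn σ (fun i hi => mem_erase.2 ⟨?_, ?_⟩) σ.injective.injOn
      · exact σ.injective.ne (mem_Iio.1 hi).ne
      · by_contra hiT
        have := (key_lt_iff i j).2 (mem_Iio.1 hi)
        have := le_key _ hiT
        have := key_lt _ hj
        omega
    rw [Fin.card_Iio, card_erase_of_mem hj] at this
    have := card_pos.2 ⟨_, hj⟩
    omega
  · by_contra hjT
    have : #T ≤ #(Iio j) := by
      refine card_le_card_of_injOn σ.symm (fun v hv => mem_Iio.2 ?_) σ.symm.injective.injOn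
      rw [← key_lt_iff, σ.apply_symm_apply]
      exact (key_lt v hv).trans_le (le_key _ hjT)
    rw [Fin.card_Iio] at this
    omega
  · rw [← key_lt_iff]
    simp only [key, if_neg hi, if_neg hj]
    exact Nat.add_lt_add_left h _

theorem exists_isZeroForcingOrder_of_rank {S : Finset V} {k : ℕ} (hS : #S ≤ k)
    (hk : k ≤ Fintype.card V) (r : V → ℕ) (hr : Set.InjOn r (↑S)ᶜ)
    (hforce : ∀ d ∉ S, ∃ u, H.Adj u d ∧ (u ∈ S ∨ r u < r d) ∧
      ∀ w ∉ S, H.Adj u w → w ≠ d → r w < r d) :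
    ∃ σ, IsZeroForcingOrder H k σ := by
  obtain ⟨T, hST, hT⟩ := exists_superset_card_eq hS hk
  obtain ⟨σ, hσT, hσr⟩ := exists_equiv_fin_mem_iff_lt T r
    (hr.mono (Set.compl_subset_compl.2 (by exact_mod_cast hST)))
  refine ⟨σ, fun j hj => ?_⟩
  have hjT : σ j ∉ T := by rw [hσT, hT]; omega
  obtain ⟨u, hud, hu, hw⟩ := hforce (σ j) (fun h => hjT (hST h))
  refine ⟨σ.symm u, ?_, fun l hl => ⟨fun hadj => ?_, fun h => h ▸ by simpa using hud⟩⟩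
  · by_cases huT : u ∈ T
    · have := (hσT (σ.symm u)).1 (by simpa using huT)
      omega
    · have hS : u ∉ S := fun h => huT (hST h)
      exact hσr _ _ (by simpa using huT) hjT (by simpa [hS] using hu)
  · rw [σ.apply_symm_apply] at hadj
    by_contra hlj
    have hlT : σ l ∉ T := by rw [hσT, hT]; omega
    have := hσr _ _ hlT hjT (hw _ (fun h => hlT (hST h)) hadj (σ.injective.ne hlj))
    exact absurd (Fin.lt_def.1 this) (by omega)

end ZeroForcing

namespace SimpleGraph

variable {V : Type*} {G : SimpleGraph V}

theorem edgeSet_eq_of_mem_of_mem {x y : V} {e e' : G.edgeSet} (hxy : x ≠ y)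
    (hx : x ∈ (e : Sym2 V)) (hy : y ∈ (e : Sym2 V)) (hx' : x ∈ (e' : Sym2 V))
    (hy' : y ∈ (e' : Sym2 V)) : e = e' :=
  Subtype.ext <| ((Sym2.mem_and_mem_iff hxy).1 ⟨hx, hy⟩).trans
    ((Sym2.mem_and_mem_iff hxy).1 ⟨hx', hy'⟩).symm

theorem exists_edgeSet_mem_forall_le [Fintype G.edgeSet] (f : G.edgeSet → ℕ) {v : V}
    (hv : ∃ w, G.Adj v w) :
    ∃ e : G.edgeSet, v ∈ (e : Sym2 V) ∧ ∀ g : G.edgeSet, v ∈ (g : Sym2 V) → f g ≤ f e := by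
  classical
  obtain ⟨w, hvw⟩ := hv
  obtain ⟨e, he, hmax⟩ := (univ.filter fun e : G.edgeSet => v ∈ (e : Sym2 V)).exists_max_image f
    ⟨⟨s(v, w), G.mem_edgeSet.2 hvw⟩, by simp⟩
  exact ⟨e, (mem_filter.1 he).2, fun g hg => hmax g (by simpa using hg)⟩

end SimpleGraph

theorem IsZeroForcingOrder.exists_forcer_lineGraph {V : Type*} {G : SimpleGraph V}
    [Fintype G.edgeSet] {k : ℕ}
    {σ : Fin (Fintype.card G.edgeSet) ≃ G.edgeSet} (hσ : IsZeroForcingOrder G.lineGraph k σ)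
    {e : G.edgeSet} (he : k ≤ (σ.symm e : ℕ)) :
    ∃ f : G.edgeSet, ∃ x ∈ (f : Sym2 V), x ∈ (e : Sym2 V) ∧ (σ.symm f : ℕ) < σ.symm e ∧
      ∀ e', (σ.symm e : ℕ) ≤ σ.symm e' → e' ≠ e → ∀ y ∈ (f : Sym2 V), y ∉ (e' : Sym2 V) := by
  obtain ⟨i, hij, hi⟩ := hσ (σ.symm e) he
  obtain ⟨-, x, hxf, hxe⟩ := lineGraph_adj_iff_exists.1 (by simpa using (hi _ le_rfl).2 rfl)
  refine ⟨σ i, x, hxf, hxe, by simpa using hij, fun e' hle hne y hyf hye' => hne ?_⟩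
  have hadj : G.lineGraph.Adj (σ i) e' :=
    lineGraph_adj_iff_exists.2 ⟨by rintro rfl; simp at hle; omega, y, hyf, hye'⟩
  simpa using (hi (σ.symm e') hle).1 (by simpa using hadj)

/-- A zero forcing order of `G.lineGraph`, read in `G`: the edges of `time < k` are the initial
ones, and a later edge `e` is forced by `forcer e` through their common endpoint `pivot e`. -/
structure LineForcing {V : Type*} (G : SimpleGraph V) (k : ℕ) where
  time : G.edgeSet → ℕ
  time_injective : Function.Injective time
  forcer : G.edgeSet → G.edgeSet
  pivot : G.edgeSet → V
  time_forcer_lt : ∀ e, k ≤ time e → time (forcer e) < time e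
  pivot_mem_forcer : ∀ e, k ≤ time e → pivot e ∈ (forcer e : Sym2 V)
  pivot_mem : ∀ e, k ≤ time e → pivot e ∈ (e : Sym2 V)
  not_mem_of_mem_forcer : ∀ e, k ≤ time e → ∀ e', time e ≤ time e' → e' ≠ e →
    ∀ x ∈ (forcer e : Sym2 V), x ∉ (e' : Sym2 V)
  lastEdge : V → G.edgeSet
  mem_lastEdge : ∀ v, v ∈ (lastEdge v : Sym2 V)
  time_le_time_lastEdge : ∀ v (e : G.edgeSet), v ∈ (e : Sym2 V) → time e ≤ time (lastEdge v)

namespace LineForcing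

variable {V : Type*} {G : SimpleGraph V} {k : ℕ}

theorem nonempty_of_isZeroForcingOrder [Fintype G.edgeSet] (hiso : ∀ v, ∃ w, G.Adj v w)
    {σ : Fin (Fintype.card G.edgeSet) ≃ G.edgeSet} (hσ : IsZeroForcingOrder G.lineGraph k σ) :
    Nonempty (LineForcing G k) := by
  let time : G.edgeSet → ℕ := fun e => σ.symm e
  have hforcer (e : G.edgeSet) : ∃ f : G.edgeSet, ∃ x ∈ (e : Sym2 V), k ≤ time e →
      time f < time e ∧ x ∈ (f : Sym2 V) ∧
        ∀ e', time e ≤ time e' → e' ≠ e → ∀ y ∈ (f : Sym2 V), y ∉ (e' : Sym2 V) := by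
    by_cases he : k ≤ time e
    · obtain ⟨f, x, hxf, hxe, hfe, hdisj⟩ := hσ.exists_forcer_lineGraph he
      exact ⟨f, x, hxe, fun _ => ⟨hfe, hxf, hdisj⟩⟩
    · exact ⟨e, _, Sym2.out_fst_mem _, fun h => absurd h he⟩
  choose forcer pivot hpivot hforced using hforcer
  choose lastEdge hmem hmax using fun v => G.exists_edgeSet_mem_forall_le time (hiso v)
  exact ⟨{
    time := time
    time_injective := fun e e' h => σ.symm.injective (Fin.ext h)
    forcer := forcer
    pivot := pivot
    time_forcer_lt := fun e he => (hforced e he).1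
    pivot_mem_forcer := fun e he => (hforced e he).2.1
    pivot_mem := fun e _ => hpivot e
    not_mem_of_mem_forcer := fun e he => (hforced e he).2.2
    lastEdge := lastEdge
    mem_lastEdge := hmem
    time_le_time_lastEdge := hmax }⟩

variable (D : LineForcing G k) {e a : G.edgeSet} {v w d : V}

theorem time_le_of_pivot_mem (he : k ≤ D.time e) {g : G.edgeSet}
    (hg : D.pivot e ∈ (g : Sym2 V)) : D.time g ≤ D.time e := by
  by_contra! hlt
  exact D.not_mem_of_mem_forcer e he g hlt.le (fun h => hlt.ne (congrArg D.time h).symm) _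
    (D.pivot_mem_forcer e he) hg

theorem lastEdge_pivot (he : k ≤ D.time e) : D.lastEdge (D.pivot e) = e :=
  D.time_injective <| le_antisymm (D.time_le_of_pivot_mem he (D.mem_lastEdge _))
    (D.time_le_time_lastEdge _ e (D.pivot_mem e he))

theorem forcer_injOn : Set.InjOn D.forcer {e | k ≤ D.time e} := by
  intro e he e' he' h
  wlog hle : D.time e ≤ D.time e' generalizing e e'
  · exact (this he' he h.symm (le_of_not_ge hle)).symm
  by_contra hne
  exact D.not_mem_of_mem_forcer e he e' hle (Ne.symm hne) _
    (h ▸ D.pivot_mem_forcer e' he') (D.pivot_mem e' he')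

theorem time_lastEdge_lt_of_mem_forcer (he : k ≤ D.time e) {o : V}
    (ho : o ∈ (D.forcer e : Sym2 V)) (hop : o ≠ D.pivot e) :
    D.time (D.lastEdge o) < D.time e := by
  by_contra! hle
  have hlast : D.lastEdge o = e := by
    by_contra hne
    exact D.not_mem_of_mem_forcer e he _ hle hne o ho (D.mem_lastEdge o)
  have : D.forcer e = e := edgeSet_eq_of_mem_of_mem hop ho (D.pivot_mem_forcer e he)
    (hlast ▸ D.mem_lastEdge o) (D.pivot_mem e he)
  exact (D.time_forcer_lt e he).ne (congrArg D.time this)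

def IsPivot (v : V) : Prop := k ≤ D.time (D.lastEdge v) ∧ D.pivot (D.lastEdge v) = v

theorem isPivot_pivot (he : k ≤ D.time e) : D.IsPivot (D.pivot e) := by
  rw [IsPivot, D.lastEdge_pivot he]
  exact ⟨he, rfl⟩

open Classical in
/-- `v` will be forced in `G` along this edge, at its time, by `partner v`. -/
noncomputable def home (v : V) : G.edgeSet :=
  if D.IsPivot v then D.forcer (D.lastEdge v) else D.lastEdge v

theorem home_of_isPivot (h : D.IsPivot v) : D.home v = D.forcer (D.lastEdge v) := by
  classical exact if_pos h

theorem home_of_not_isPivot (h : ¬ D.IsPivot v) : D.home v = D.lastEdge v := by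
  classical exact if_neg h

theorem home_pivot (he : k ≤ D.time e) : D.home (D.pivot e) = D.forcer e := by
  rw [D.home_of_isPivot (D.isPivot_pivot he), D.lastEdge_pivot he]

theorem mem_home (v : V) : v ∈ (D.home v : Sym2 V) := by
  by_cases h : D.IsPivot v
  · rw [D.home_of_isPivot h]
    have := D.pivot_mem_forcer _ h.1
    rwa [h.2] at this
  · rw [D.home_of_not_isPivot h]
    exact D.mem_lastEdge v

theorem time_home_lt_of_isPivot (h : D.IsPivot v) :
    D.time (D.home v) < D.time (D.lastEdge v) := by
  rw [D.home_of_isPivot h]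
  exact D.time_forcer_lt _ h.1

theorem time_home_le (v : V) : D.time (D.home v) ≤ D.time (D.lastEdge v) := by
  by_cases h : D.IsPivot v
  · exact (D.time_home_lt_of_isPivot h).le
  · rw [D.home_of_not_isPivot h]

noncomputable def partner (v : V) : V := Sym2.Mem.other (D.mem_home v)

theorem home_eq (v : V) : (D.home v : Sym2 V) = s(v, D.partner v) :=
  (Sym2.other_spec _).symm

theorem partner_ne (v : V) : D.partner v ≠ v :=
  Sym2.other_ne (G.not_isDiag_of_mem_edgeSet (D.home v).2) _

theorem adj_partner (v : V) : G.Adj (D.partner v) v := by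
  have := (D.home v).2
  rw [D.home_eq] at this
  exact (G.mem_edgeSet.1 this).symm

theorem eq_partner_of_mem_home {x : V} (hx : x ∈ (D.home v : Sym2 V)) (hxv : x ≠ v) :
    x = D.partner v := by
  rw [D.home_eq, Sym2.mem_iff] at hx
  exact hx.resolve_left hxv

theorem partner_eq_of_home_eq (hvw : v ≠ w) (h : D.home v = D.home w) : D.partner v = w :=
  (D.eq_partner_of_mem_home (h ▸ D.mem_home w) hvw.symm).symm

/-- The labels break the tie between two vertices whose common last edge is the home of both. -/
def IsForceable [Fintype V] (v : V) : Prop :=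
  D.lastEdge (D.partner v) = D.home v ∧
    (D.home (D.partner v) = D.lastEdge v →
      Fintype.equivFin V (D.partner v) < Fintype.equivFin V v)

variable [Fintype V]

theorem isForceable_of_le_time_home (hv : k ≤ D.time (D.home v)) : D.IsForceable v := by
  have hpv : D.pivot (D.home v) ≠ v := fun hpv =>
    (D.time_forcer_lt _ hv).ne (by rw [← D.home_pivot hv, hpv])
  have hpartner := D.eq_partner_of_mem_home (D.pivot_mem _ hv) hpv
  have hlast : D.lastEdge (D.partner v) = D.home v := hpartner ▸ D.lastEdge_pivot hv
  refine ⟨hlast, fun hhome => ?_⟩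
  have := D.time_forcer_lt _ hv
  rw [← D.home_pivot hv, hpartner, hhome] at this
  exact absurd (D.time_home_le v) this.not_ge

theorem isForceable_and_not_of_isPivot (hvw : v ≠ w) (h : D.home v = D.home w)
    (hv : D.IsPivot v) (hw : ¬ D.IsPivot w) : D.IsForceable v ∧ ¬ D.IsForceable w := by
  have hlt := D.time_home_lt_of_isPivot hv
  refine ⟨⟨?_, fun hwv => ?_⟩, fun ⟨hlast, _⟩ => ?_⟩
  · rw [D.partner_eq_of_home_eq hvw h, ← D.home_of_not_isPivot hw, h]
  · rw [D.partner_eq_of_home_eq hvw h, ← h] at hwv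
    exact (hlt.ne (congrArg D.time hwv)).elim
  · rw [D.partner_eq_of_home_eq hvw.symm h.symm, ← h] at hlast
    exact hlt.ne' (congrArg D.time hlast)

theorem isForceable_iff_not_of_home_eq (hvw : v ≠ w) (h : D.home v = D.home w) :
    D.IsForceable v ↔ ¬ D.IsForceable w := by
  by_cases hv : D.IsPivot v <;> by_cases hw : D.IsPivot w
  · refine absurd ?_ hvw
    rw [D.home_of_isPivot hv, D.home_of_isPivot hw] at h
    rw [← hv.2, ← hw.2, D.forcer_injOn hv.1 hw.1 h]
  · have := D.isForceable_and_not_of_isPivot hvw h hv hw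
    tauto
  · have := D.isForceable_and_not_of_isPivot hvw.symm h.symm hw hv
    tauto
  · have hlast : D.lastEdge v = D.lastEdge w := by
      rwa [D.home_of_not_isPivot hv, D.home_of_not_isPivot hw] at h
    have hlabel := (Fintype.equivFin V).injective.ne hvw
    simp only [IsForceable, D.partner_eq_of_home_eq hvw h, D.partner_eq_of_home_eq hvw.symm h.symm,
      D.home_of_not_isPivot hv, D.home_of_not_isPivot hw, hlast, true_imp_iff, true_and, not_lt]
    exact ⟨le_of_lt, fun hle => lt_of_le_of_ne hle hlabel.symm⟩

/-- The initial edge `a` joins `w` to the partner of a forceable `d` whose home is not later than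
that of `w`, so `w` would not be coloured in time; such a `w` is made initial and charged to `a`. -/
def IsBlockedBy (a : G.edgeSet) (w : V) : Prop :=
  D.time a < k ∧ D.lastEdge w ≠ a ∧ ∃ d, D.IsForceable d ∧ d ≠ w ∧
    (a : Sym2 V) = s(D.partner d, w) ∧ D.home (D.partner d) ≠ a ∧
      D.time (D.home d) ≤ D.time (D.home w)

def IsBlocked (w : V) : Prop := ∃ a, D.IsBlockedBy a w

def IsForced (v : V) : Prop := D.IsForceable v ∧ ¬ D.IsBlocked v

theorem not_isForced_partner_or_time_home_lt (hd : D.IsForceable d) :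
    ¬ D.IsForced (D.partner d) ∨ D.time (D.home (D.partner d)) < D.time (D.home d) := by
  by_cases hu : D.IsPivot (D.partner d)
  · right
    rw [← hd.1]
    exact D.time_home_lt_of_isPivot hu
  · left
    have hhome : D.home (D.partner d) = D.home d := (D.home_of_not_isPivot hu).trans hd.1
    exact fun hu => (D.isForceable_iff_not_of_home_eq (D.partner_ne d) hhome).1 hu.1 hd

theorem time_home_lt_of_adj_partner (hd : D.IsForceable d) (hwd : w ≠ d)
    (hadj : G.Adj (D.partner d) w) (hw : ¬ D.IsBlocked w) :
    D.time (D.home w) < D.time (D.home d) := by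
  set u := D.partner d
  let a : G.edgeSet := ⟨s(u, w), hadj⟩
  have hlast : D.lastEdge u = D.home d := hd.1
  have hah : a ≠ D.home d := by
    intro h
    rcases Sym2.mem_iff.1 (h ▸ D.mem_home d : d ∈ (a : Sym2 V)) with h' | h'
    · exact D.partner_ne d h'.symm
    · exact hwd h'.symm
  have hta : D.time a < D.time (D.home d) := lt_of_le_of_ne
    (hlast ▸ D.time_le_time_lastEdge u a (Sym2.mem_mk_left u w)) (D.time_injective.ne hah)
  by_cases hka : k ≤ D.time a
  · rcases Sym2.mem_iff.1 (D.pivot_mem a hka) with hp | hp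
    · exact absurd (hlast ▸ hp ▸ D.lastEdge_pivot hka).symm hah
    · rw [← hp, D.home_pivot hka]
      exact (D.time_forcer_lt a hka).trans hta
  by_cases hfa : ∃ e, k ≤ D.time e ∧ D.forcer e = a
  · obtain ⟨e, he, hfe⟩ := hfa
    rcases Sym2.mem_iff.1 (hfe ▸ D.pivot_mem_forcer e he : D.pivot e ∈ (a : Sym2 V)) with hp | hp
    · calc D.time (D.home w) ≤ D.time (D.lastEdge w) := D.time_home_le w
        _ < D.time e := D.time_lastEdge_lt_of_mem_forcer he (hfe ▸ Sym2.mem_mk_right u w)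
            (hp ▸ hadj.ne.symm)
        _ = D.time (D.home d) := by rw [← hlast, ← hp, D.lastEdge_pivot he]
    · rwa [← hp, D.home_pivot he, hfe]
  by_cases hwl : D.lastEdge w = a
  · rwa [D.home_of_not_isPivot (fun h => hka (hwl ▸ h.1)), hwl]
  by_contra! hle
  refine hw ⟨a, not_le.1 hka, hwl, d, hd, hwd.symm, rfl, ?_, hle⟩
  by_cases hu : D.IsPivot u
  · rw [D.home_of_isPivot hu]
    exact fun h => hfa ⟨_, hu.1, h⟩
  · rw [D.home_of_not_isPivot hu, hlast]
    exact hah.symm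

open Classical in
noncomputable def charge (v : V) : G.edgeSet := if h : D.IsBlocked v then h.choose else D.home v

theorem isBlockedBy_charge (h : D.IsBlocked v) : D.IsBlockedBy (D.charge v) v := by
  rw [charge, dif_pos h]
  exact h.choose_spec

theorem charge_of_not_isBlocked (h : ¬ D.IsBlocked v) : D.charge v = D.home v := by
  rw [charge, dif_neg h]

theorem time_charge_lt (hv : ¬ D.IsForced v) : D.time (D.charge v) < k := by
  by_cases hb : D.IsBlocked v
  · exact (D.isBlockedBy_charge hb).1
  · rw [D.charge_of_not_isBlocked hb]
    by_contra! h
    exact hv ⟨D.isForceable_of_le_time_home h, hb⟩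

theorem eq_of_isBlockedBy (hv : D.IsBlockedBy a v) (hw : D.IsBlockedBy a w) : v = w := by
  obtain ⟨-, hva, d, hd, -, hav, -, hdv⟩ := hv
  obtain ⟨-, -, d', hd', -, haw, -, hdw⟩ := hw
  by_contra hvw
  obtain ⟨hdw', hvd'⟩ : D.partner d = w ∧ v = D.partner d' := by
    rcases Sym2.eq_iff.1 (hav.symm.trans haw) with h | h
    · exact absurd h.2 hvw
    · exact h
  have hle : D.time (D.lastEdge w) ≤ D.time (D.lastEdge v) := by
    rw [← hdw', hd.1]
    exact hdv.trans (D.time_home_le v)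
  have hle' : D.time (D.lastEdge v) ≤ D.time (D.lastEdge w) := by
    rw [hvd', hd'.1]
    exact hdw.trans (D.time_home_le w)
  have hlast : D.lastEdge v = D.lastEdge w := D.time_injective (le_antisymm hle' hle)
  refine hva (edgeSet_eq_of_mem_of_mem hvw (D.mem_lastEdge v) (hlast ▸ D.mem_lastEdge w) ?_ ?_)
  · rw [hav]
    exact Sym2.mem_mk_right _ _
  · rw [hav, hdw']
    exact Sym2.mem_mk_left _ _

theorem home_ne_of_isBlockedBy (hv : D.IsBlockedBy a v) (hwv : w ≠ v) : D.home w ≠ a := by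
  obtain ⟨-, -, d, -, -, hav, hua, -⟩ := hv
  intro hwa
  have hw := hwa ▸ D.mem_home w
  rw [hav, Sym2.mem_iff] at hw
  exact hua (hw.resolve_right hwv ▸ hwa)

theorem charge_injOn : Set.InjOn D.charge {v | ¬ D.IsForced v} := by
  intro v hv w hw h
  by_cases hbv : D.IsBlocked v <;> by_cases hbw : D.IsBlocked w
  · exact D.eq_of_isBlockedBy (D.isBlockedBy_charge hbv) (h ▸ D.isBlockedBy_charge hbw)
  · refine absurd ?_ (D.home_ne_of_isBlockedBy (D.isBlockedBy_charge hbv)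
      (fun hwv : w = v => hbw (hwv ▸ hbv)))
    rw [h, D.charge_of_not_isBlocked hbw]
  · refine absurd ?_ (D.home_ne_of_isBlockedBy (D.isBlockedBy_charge hbw)
      (fun hvw : v = w => hbv (hvw ▸ hbw)))
    rw [← h, D.charge_of_not_isBlocked hbv]
  · by_contra hvw
    rw [D.charge_of_not_isBlocked hbv, D.charge_of_not_isBlocked hbw] at h
    have hv' : ¬ D.IsForceable v := fun h => hv ⟨h, hbv⟩
    exact hv' ((D.isForceable_iff_not_of_home_eq hvw h).2 fun h => hw ⟨h, hbw⟩)

theorem card_not_isForced_le [DecidablePred D.IsForced] : #{v | ¬ D.IsForced v} ≤ k := by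
  simpa using card_le_card_of_injOn (fun v => D.time (D.charge v)) (t := range k)
    (fun v hv => mem_range.2 (D.time_charge_lt (by simpa using hv)))
    (D.time_injective.comp_injOn (D.charge_injOn.mono (by simp)))

end LineForcing

theorem LineForcing.exists_isZeroForcingOrder {V : Type*} [Fintype V] {G : SimpleGraph V}
    {k : ℕ} (D : LineForcing G k) (hk : k ≤ Fintype.card V) :
    ∃ σ, IsZeroForcingOrder G k σ := by
  classical
  refine exists_isZeroForcingOrder_of_rank D.card_not_isForced_le hk (fun v => D.time (D.home v))
    (fun v hv w hw h => ?_) (fun d hd => ?_)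
  · by_contra hvw
    simp only [coe_filter, mem_univ, true_and, Set.compl_ofPred, not_not, Set.mem_ofPred_eq]
      at hv hw
    exact (D.isForceable_iff_not_of_home_eq hvw (D.time_injective h)).1 hv.1 hw.1
  · simp only [mem_filter, mem_univ, true_and, not_not] at hd
    refine ⟨D.partner d, D.adj_partner d,
      by simpa using D.not_isForced_partner_or_time_home_lt hd.1,
      fun w hw hadj hwd => D.time_home_lt_of_adj_partner hd.1 hwd hadj ?_⟩
    simp only [mem_filter, mem_univ, true_and, not_not] at hw
    exact hw.2

theorem zeroForcingNumber_le_zeroForcingNumber_lineGraph_general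
    {V : Type*} [Fintype V] [DecidableEq V]
    (G : SimpleGraph V) [DecidableRel G.Adj]
    (hiso : ∀ v : V, ∃ w : V, G.Adj v w) :
    zeroForcingNumber G ≤ zeroForcingNumber G.lineGraph := by
  obtain ⟨hk, σL, hσL⟩ := zeroForcingNumber_mem G.lineGraph
  rcases le_or_gt (Fintype.card V) (zeroForcingNumber G.lineGraph) with hn | hn
  · exact zeroForcingNumber_le hk (IsZeroForcingOrder.of_card_le hn (Fintype.equivFin V).symm)
  · obtain ⟨D⟩ := LineForcing.nonempty_of_isZeroForcingOrder hiso hσL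
    obtain ⟨σ, hσ⟩ := D.exists_isZeroForcingOrder hn.le
    exact zeroForcingNumber_le hk hσ

theorem zeroForcingNumber_le_zeroForcingNumber_lineGraph
    {V : Type*} [Fintype V] [DecidableEq V] [Nonempty V]
    (G : SimpleGraph V) [DecidableRel G.Adj]
    (hiso : ∀ v : V, ∃ w : V, G.Adj v w) :
    zeroForcingNumber G ≤ zeroForcingNumber G.lineGraph :=
  zeroForcingNumber_le_zeroForcingNumber_lineGraph_general G hiso
end
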